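/- For h ≥ 1, α ∈ [0,1], and all x ≥ 0: h^α(⌊x⌋ + (x − ⌊x⌋)^α) ≤ ⌊hx⌋ + (hx − ⌊hx⌋)^α. -/

import Mathlib

/-!
Write `φ(y) = ⌊y⌋ + {y}^α`, so the claim is `h^α φ(x) ≤ φ(hx)`. With `x = n + u`, `n = ⌊x⌋`,
the left side is `h^α n + (hu)^α`. If `hu ≥ 1`, both terms only grow when `α` is replaced by `1`,
and `hx ≤ φ(hx)`. Otherwise Bernoulli's inequality `h^α ≤ 1 + α(h - 1)` gives
`h^α n ≤ ⌊hn⌋ + α{hn}`, and it remains to show `α s + r^α ≤ φ(s + r)` for `s, r ∈ [0, 1)`: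
below `1` this is concavity of `t ↦ t^α`, above `1` it is subadditivity of `t ↦ t^α`.
-/

open Set

noncomputable def floorAddFractRpow (α y : ℝ) : ℝ := ⌊y⌋ + Int.fract y ^ α

section

variable {α : ℝ}

lemma floorAddFractRpow_intCast_add (n : ℤ) (y : ℝ) :
    floorAddFractRpow α (n + y) = n + floorAddFractRpow α y := by
  simp only [floorAddFractRpow, Int.fract_intCast_add, Int.floor_intCast_add, Int.cast_add]
  ring

lemma floorAddFractRpow_of_mem_Ico {y : ℝ} (hy : y ∈ Ico 0 1) : floorAddFractRpow α y = y ^ α := by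
  simp [floorAddFractRpow, Int.floor_eq_zero_iff.2 hy, Int.fract_eq_self.2 hy]

lemma self_le_floorAddFractRpow (hα : α ≤ 1) (y : ℝ) : y ≤ floorAddFractRpow α y := by
  have := Real.self_le_rpow_of_le_one (Int.fract_nonneg y) (Int.fract_lt_one y).le hα
  linarith [Int.floor_add_fract y, show floorAddFractRpow α y = ⌊y⌋ + Int.fract y ^ α from rfl]

lemma rpow_le_one_add_mul_sub_one (hα : α ∈ Icc 0 1) {t : ℝ} (ht : 0 ≤ t) :
    t ^ α ≤ 1 + α * (t - 1) := by
  simpa using rpow_one_add_le_one_add_mul_self (s := t - 1) (by linarith) hα.1 hα.2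

/-- Concavity of `t ↦ t^α` on `[r, 1]` at `r + s = (1 - λ) r + λ`, `λ = s / (1 - r)`, gives
`(r + s)^α - r^α ≥ λ (1 - r^α)`, and Bernoulli bounds `1 - r^α ≥ α (1 - r)`. -/
lemma rpow_add_mul_le_rpow_add (hα : α ∈ Icc 0 1) {r s : ℝ} (hr : 0 ≤ r) (hs : 0 ≤ s)
    (hrs : r + s ≤ 1) : r ^ α + α * s ≤ (r + s) ^ α := by
  rcases hs.eq_or_lt with rfl | hs
  · simp
  have h1r : 0 < 1 - r := by linarith
  set l := s / (1 - r)
  have hl_mul : l * (1 - r) = s := div_mul_cancel₀ s h1r.ne'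
  have hl0 : 0 ≤ l := div_nonneg hs.le h1r.le
  have hl1 : l ≤ 1 := (div_le_one h1r).2 (by linarith)
  have hconc := (Real.concaveOn_rpow hα.1 hα.2).2 (mem_Ici.2 hr) (mem_Ici.2 zero_le_one)
    (sub_nonneg.2 hl1) hl0 (sub_add_cancel 1 l)
  simp only [smul_eq_mul, mul_one, Real.one_rpow] at hconc
  rw [show (1 - l) * r + l = r + s by linear_combination hl_mul] at hconc
  have := mul_le_mul_of_nonneg_left (rpow_le_one_add_mul_sub_one hα hr) hl0
  linear_combination hconc + this - α * hl_mul

lemma rpow_add_mul_le_floorAddFractRpow_add (hα : α ∈ Icc 0 1) {r s : ℝ} (hr : r ∈ Ico 0 1)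
    (hs : s ∈ Ico 0 1) : r ^ α + α * s ≤ floorAddFractRpow α (s + r) := by
  obtain ⟨hr0, hr1⟩ := hr
  obtain ⟨hs0, hs1⟩ := hs
  rcases lt_or_ge (s + r) 1 with hsr | hsr
  · rw [floorAddFractRpow_of_mem_Ico ⟨by linarith, hsr⟩, add_comm s]
    exact rpow_add_mul_le_rpow_add hα hr0 hs0 (by linarith)
  · rw [show s + r = ((1 : ℤ) : ℝ) + (s + r - 1) by push_cast; ring,
      floorAddFractRpow_intCast_add, floorAddFractRpow_of_mem_Ico ⟨by linarith, by linarith⟩]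
    have hsub := Real.rpow_add_le_add_rpow (sub_nonneg.2 hsr) (sub_nonneg.2 hs1.le) hα.1 hα.2
    rw [show s + r - 1 + (1 - s) = r by ring] at hsub
    have := rpow_le_one_add_mul_sub_one hα (sub_nonneg.2 hs1.le)
    push_cast
    linarith

lemma rpow_mul_intCast_le (hα : α ∈ Icc 0 1) {h : ℝ} (hh : 1 ≤ h) {n : ℤ} (hn : 0 ≤ n) :
    h ^ α * n ≤ ⌊h * n⌋ + α * Int.fract (h * n) := by
  have hn' : (0 : ℝ) ≤ n := Int.cast_nonneg hn
  have hfloor : (n : ℝ) ≤ ⌊h * n⌋ :=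
    Int.cast_le.2 (Int.le_floor.2 (le_mul_of_one_le_left hn' hh))
  have hsplit := Int.floor_add_fract (h * n)
  calc h ^ α * n ≤ (1 + α * (h - 1)) * n :=
        mul_le_mul_of_nonneg_right (rpow_le_one_add_mul_sub_one hα (by linarith)) hn'
    _ = n + α * (⌊h * n⌋ - n) + α * Int.fract (h * n) := by linear_combination -α * hsplit
    _ ≤ ⌊h * n⌋ + α * Int.fract (h * n) := by nlinarith [hα.2]

lemma rpow_mul_floorAddFractRpow_le (hα : α ∈ Icc 0 1) {h x : ℝ} (hh : 1 ≤ h) (hx : 0 ≤ x) :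
    h ^ α * floorAddFractRpow α x ≤ floorAddFractRpow α (h * x) := by
  set n := ⌊x⌋
  set u := Int.fract x
  have hu0 : 0 ≤ u := Int.fract_nonneg x
  have hxnu : x = n + u := (Int.floor_add_fract x).symm
  have hlhs : h ^ α * floorAddFractRpow α x = h ^ α * n + (h * u) ^ α := by
    rw [floorAddFractRpow, Real.mul_rpow (by linarith) hu0]
    ring
  rw [hlhs]
  rcases le_or_gt 1 (h * u) with hhu | hhu
  · have hhn : h ^ α * n ≤ h * n := mul_le_mul_of_nonneg_right
      (Real.rpow_le_self_of_one_le hh hα.2) (Int.cast_nonneg (Int.floor_nonneg.2 hx))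
    have hhu_rpow := Real.rpow_le_self_of_one_le hhu hα.2
    have hhx_le := self_le_floorAddFractRpow hα.2 (h * x)
    rw [hxnu] at hhx_le ⊢
    linarith
  · have hhx : h * x = ⌊h * n⌋ + (Int.fract (h * n) + h * u) := by
      linear_combination h * hxnu - Int.floor_add_fract (h * (n : ℝ))
    rw [hhx, floorAddFractRpow_intCast_add]
    have hfract := rpow_add_mul_le_floorAddFractRpow_add hα ⟨mul_nonneg (by linarith) hu0, hhu⟩
      ⟨Int.fract_nonneg (h * n), Int.fract_lt_one (h * n)⟩
    linarith [rpow_mul_intCast_le hα hh (Int.floor_nonneg.2 hx)]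

end

theorem stmt11 (α h x : ℝ) (hα : α ∈ Set.Icc (0 : ℝ) 1)
    (hh : 1 ≤ h) (hx : 0 ≤ x) :
    h ^ α * ((⌊x⌋ : ℝ) + (x - ⌊x⌋) ^ α) ≤
      (⌊h * x⌋ : ℝ) + (h * x - ⌊h * x⌋) ^ α :=
  rpow_mul_floorAddFractRpow_le hα hh hx
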